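/- Let n ≥ 1, let p ≥ 1 be a real number, let σ(x) = 1/(1 + e^{−x}) be the logistic function, and let f : ℝⁿ → ℝ satisfy f(v) ≥ 0 for all v ∈ ℝⁿ. For t ∈ (0,1)ⁿ, set v = σ^{−1}(t) componentwise, and define δ^f(v)ᵢ = f(v) if i is the (least) index attaining the maximum of the components of v and 0 otherwise; define δ^g(t) = σ(v + δ^f(v)) − σ(v) (componentwise). Then: (1) for every t ∈ (0,1)ⁿ and every index i, δ^g(t)ᵢ ∈ [0,1] and 0 ≤ tᵢ + δ^g(t)ᵢ ≤ 1, i.e. δ^g is a t-conorm boost function on (0,1)ⁿ; and (2) δ^g is minimal for the Gödel t-conorm and the l_p-norm: for every t-conorm boost function δ′ : [0,1]ⁿ → [0,1]ⁿ and every t ∈ (0,1)ⁿ, if ‖δ′(t)‖_p < ‖δ^g(t)‖_p then max_{j=1}^{n} (t_j + δ′(t)_j) < max_{j=1}^{n} (t_j + δ^g(t)_j). -/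

import Mathlib

/-! Off the index `m` of the largest logit, `δ^g(t)` vanishes, and at `m` it is the increment
`σ(σ⁻¹(tₘ) + f(v)) − tₘ ≥ 0`; since `σ` is increasing, `tₘ` is also the largest coordinate of `t`.
Hence `‖δ^g(t)‖_p = δ^g(t)ₘ` and `max (t + δ^g(t)) = tₘ + δ^g(t)ₘ`, while every coordinate of a
vector is bounded in absolute value by its `l_p`-norm. So if `‖δ′(t)‖_p < δ^g(t)ₘ`, then
`tⱼ + δ′(t)ⱼ ≤ tₘ + |δ′(t)ⱼ| < tₘ + δ^g(t)ₘ` for every `j`. -/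

/-- The logistic function `σ(x) = 1/(1 + e^{−x})`. -/
noncomputable def logistic (x : ℝ) : ℝ := 1 / (1 + Real.exp (-x))

/-- The logit function, inverse of the logistic: `σ⁻¹(t) = log(t/(1−t))` for `t ∈ (0,1)`. -/
noncomputable def logit (t : ℝ) : ℝ := Real.log (t / (1 - t))

/-- The least index attaining the maximum of the components of `t : Fin (n+1) → ℝ`. -/
noncomputable def argmaxIdx {n : ℕ} (t : Fin (n + 1) → ℝ) : Fin (n + 1) :=
  (Finset.univ.filter (fun i => ∀ j, t j ≤ t i)).min' (by
    obtain ⟨i, -, hi⟩ :=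
      Finset.exists_max_image (Finset.univ : Finset (Fin (n + 1))) t ⟨0, Finset.mem_univ 0⟩
    exact ⟨i, Finset.mem_filter.mpr ⟨Finset.mem_univ i, fun j => hi j (Finset.mem_univ j)⟩⟩)

/-- `δ^f(v)ᵢ = f(v)` if `i` is the least index attaining the maximum of the components
of `v`, and `0` otherwise. -/
noncomputable def deltaF {n : ℕ} (f : (Fin (n + 1) → ℝ) → ℝ)
    (v : Fin (n + 1) → ℝ) (i : Fin (n + 1)) : ℝ :=
  if i = argmaxIdx v then f v else 0

/-- `δ^g(t)ᵢ = σ(vᵢ + δ^f(v)ᵢ) − σ(vᵢ)` where `v = σ⁻¹(t)` componentwise. -/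
noncomputable def deltaG {n : ℕ} (f : (Fin (n + 1) → ℝ) → ℝ)
    (t : Fin (n + 1) → ℝ) (i : Fin (n + 1)) : ℝ :=
  logistic (logit (t i) + deltaF f (fun j => logit (t j)) i) - logistic (logit (t i))

/-- The `l_p`-norm of a vector: `‖x‖_p = (∑ k |x_k|^p)^(1/p)`. -/
noncomputable def lpNorm {n : ℕ} (p : ℝ) (x : Fin (n + 1) → ℝ) : ℝ :=
  (∑ k, |x k| ^ p) ^ (1 / p)

open Real Finset

lemma logistic_eq_sigmoid : logistic = sigmoid :=
  funext fun _ => one_div _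

lemma logistic_logit {t : ℝ} (ht : t ∈ Set.Ioo 0 1) : logistic (logit t) = t := by
  obtain ⟨h0, h1⟩ := ht
  rw [logistic, logit, exp_neg, exp_log (div_pos h0 (sub_pos.mpr h1))]
  field_simp
  ring

lemma le_apply_argmaxIdx {n : ℕ} (v : Fin (n + 1) → ℝ) (j : Fin (n + 1)) :
    v j ≤ v (argmaxIdx v) :=
  (mem_filter.mp (min'_mem (univ.filter fun i => ∀ j, v j ≤ v i) _)).2 j

section lpNorm

variable {n : ℕ} {p : ℝ}

lemma abs_le_lpNorm (hp : 0 < p) (x : Fin (n + 1) → ℝ) (j : Fin (n + 1)) :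
    |x j| ≤ lpNorm p x := by
  have hsingle : |x j| ^ p ≤ ∑ k, |x k| ^ p :=
    single_le_sum (fun k _ => rpow_nonneg (abs_nonneg (x k)) p) (mem_univ j)
  calc |x j| = (|x j| ^ p) ^ (1 / p) := by
        rw [← rpow_mul (abs_nonneg _), mul_one_div_cancel hp.ne', rpow_one]
    _ ≤ lpNorm p x := rpow_le_rpow (by positivity) hsingle (by positivity)

lemma lpNorm_eq_abs_of_eq_zero_of_ne (hp : 0 < p) {x : Fin (n + 1) → ℝ} {m : Fin (n + 1)}
    (hx : ∀ k ≠ m, x k = 0) : lpNorm p x = |x m| := by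
  have hsum : ∑ k, |x k| ^ p = |x m| ^ p := by
    refine sum_eq_single m (fun k _ hk => ?_) (fun hm => absurd (mem_univ m) hm)
    rw [hx k hk, abs_zero, zero_rpow hp.ne']
  rw [lpNorm, hsum, ← rpow_mul (abs_nonneg _), mul_one_div_cancel hp.ne', rpow_one]

/-- Gödel-minimality of a boost that only raises a largest coordinate. -/
lemma sup'_add_lt_of_lpNorm_lt (hp : 0 < p) {t d d' : Fin (n + 1) → ℝ} {m : Fin (n + 1)}
    (ht : ∀ j, t j ≤ t m) (hd : ∀ k ≠ m, d k = 0) (hdm : 0 ≤ d m)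
    (h : lpNorm p d' < lpNorm p d) :
    univ.sup' univ_nonempty (fun j => t j + d' j) <
      univ.sup' univ_nonempty (fun j => t j + d j) := by
  rw [lpNorm_eq_abs_of_eq_zero_of_ne hp hd, abs_of_nonneg hdm] at h
  refine lt_of_lt_of_le ((sup'_lt_iff _).mpr fun j _ => ?_) (le_sup' _ (mem_univ m))
  linarith [ht j, le_abs_self (d' j), abs_le_lpNorm hp d' j]

end lpNorm

section deltaG

variable {n : ℕ} {f : (Fin (n + 1) → ℝ) → ℝ} {t : Fin (n + 1) → ℝ} {i : Fin (n + 1)}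

lemma deltaF_nonneg (hf : ∀ v, 0 ≤ f v) (v : Fin (n + 1) → ℝ) (i : Fin (n + 1)) :
    0 ≤ deltaF f v i := by
  unfold deltaF
  split_ifs
  exacts [hf v, le_rfl]

lemma deltaF_eq_zero_of_ne {v : Fin (n + 1) → ℝ} (hi : i ≠ argmaxIdx v) : deltaF f v i = 0 :=
  if_neg hi

lemma deltaG_nonneg (hf : ∀ v, 0 ≤ f v) (t : Fin (n + 1) → ℝ) (i : Fin (n + 1)) :
    0 ≤ deltaG f t i := by
  rw [deltaG, logistic_eq_sigmoid, sub_nonneg]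
  exact sigmoid_monotone (le_add_of_nonneg_right (deltaF_nonneg hf _ i))

lemma deltaG_eq_zero_of_ne (hi : i ≠ argmaxIdx fun j => logit (t j)) : deltaG f t i = 0 := by
  rw [deltaG, deltaF_eq_zero_of_ne hi, add_zero, sub_self]

lemma add_deltaG_mem_Ioo (ht : t i ∈ Set.Ioo 0 1) : t i + deltaG f t i ∈ Set.Ioo 0 1 := by
  rw [deltaG, logistic_logit ht, add_sub_cancel, logistic_eq_sigmoid]
  exact ⟨sigmoid_pos _, sigmoid_lt_one _⟩

lemma le_apply_argmaxIdx_logit (ht : ∀ i, t i ∈ Set.Ioo 0 1) (j : Fin (n + 1)) :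
    t j ≤ t (argmaxIdx fun j => logit (t j)) := by
  rw [← logistic_logit (ht j), ← logistic_logit (ht (argmaxIdx _)), logistic_eq_sigmoid]
  exact sigmoid_monotone (le_apply_argmaxIdx (fun j => logit (t j)) j)

end deltaG

/-- For any nonnegative `f : ℝⁿ → ℝ`, the function `δ^g(t) = σ(v + δ^f(v)) − σ(v)`
(with `v = σ⁻¹(t)`) is a t-conorm boost function on `(0,1)ⁿ`, and it is minimal for
the Gödel t-conorm and the `l_p`-norm: for every t-conorm boost function `δ′` and
every `t ∈ (0,1)ⁿ`, `‖δ′(t)‖_p < ‖δ^g(t)‖_p` implies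
`max_j (t_j + δ′(t)_j) < max_j (t_j + δ^g(t)_j)`. -/
theorem deltaG_is_minimal_tbf (n : ℕ) (p : ℝ) (hp : 1 ≤ p)
    (f : (Fin (n + 1) → ℝ) → ℝ) (hf : ∀ v : Fin (n + 1) → ℝ, 0 ≤ f v) :
    (∀ t : Fin (n + 1) → ℝ, (∀ i, t i ∈ Set.Ioo (0 : ℝ) 1) →
      ∀ i, deltaG f t i ∈ Set.Icc (0 : ℝ) 1 ∧
        t i + deltaG f t i ∈ Set.Icc (0 : ℝ) 1) ∧
    (∀ δ' : (Fin (n + 1) → ℝ) → (Fin (n + 1) → ℝ),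
      (∀ t : Fin (n + 1) → ℝ, (∀ i, t i ∈ Set.Icc (0 : ℝ) 1) →
        ∀ i, δ' t i ∈ Set.Icc (0 : ℝ) 1 ∧ t i + δ' t i ∈ Set.Icc (0 : ℝ) 1) →
      ∀ t : Fin (n + 1) → ℝ, (∀ i, t i ∈ Set.Ioo (0 : ℝ) 1) →
        lpNorm p (δ' t) < lpNorm p (deltaG f t) →
        Finset.univ.sup' Finset.univ_nonempty (fun j => t j + δ' t j) <
          Finset.univ.sup' Finset.univ_nonempty (fun j => t j + deltaG f t j)) := by
  refine ⟨fun t ht i => ?_, fun δ' _ t ht hlt => ?_⟩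
  · have hsum := add_deltaG_mem_Ioo (f := f) (ht i)
    have hnonneg := deltaG_nonneg hf t i
    exact ⟨⟨hnonneg, by linarith [(ht i).1, hsum.2]⟩, Set.Ioo_subset_Icc_self hsum⟩
  · exact sup'_add_lt_of_lpNorm_lt (by linarith) (le_apply_argmaxIdx_logit ht)
      (fun k hk => deltaG_eq_zero_of_ne hk) (deltaG_nonneg hf t _) hlt
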